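/- Let G be a simple graph with maximum degree Δ. Then BC_k(G) holds for every k ≥ 2Δ + 3. -/

import Mathlib

open Finset

namespace Brouwer

variable {V : Type*}

/-- The sum of the `k` largest values of `f` on a finite type, expressed as the
supremum over all `k`-element subsets of the sum of `f` over the subset. -/
noncomputable def sumKLargest [Fintype V] (f : V → ℝ) (k : ℕ) : ℝ :=
  sSup { x : ℝ | ∃ T : Finset V, T.card = k ∧ ∑ i ∈ T, f i = x }

/-- The Laplacian matrix of a finite simple graph is Hermitian (real symmetric). -/
theorem lapMatrix_isHermitian [Fintype V] [DecidableEq V] (G : SimpleGraph V)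
    [DecidableRel G.Adj] : (G.lapMatrix ℝ).IsHermitian := by
  rw [Matrix.IsHermitian, Matrix.conjTranspose_eq_transpose_of_trivial]
  exact G.isSymm_lapMatrix ℝ

/-- The adjacency matrix of a finite simple graph is Hermitian (real symmetric). -/
theorem adjMatrix_isHermitian [Fintype V] [DecidableEq V] (G : SimpleGraph V)
    [DecidableRel G.Adj] : (G.adjMatrix ℝ).IsHermitian := by
  rw [Matrix.IsHermitian, Matrix.conjTranspose_eq_transpose_of_trivial]
  exact G.isSymm_adjMatrix

/-- The (multiset of) eigenvalues of the Laplacian matrix of `G`, indexed by vertices. -/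
noncomputable def lapEig [Fintype V] [DecidableEq V] (G : SimpleGraph V) : V → ℝ := by
  classical exact (lapMatrix_isHermitian G).eigenvalues

/-- The (multiset of) eigenvalues of the adjacency matrix of `G`, indexed by vertices. -/
noncomputable def adjEig [Fintype V] [DecidableEq V] (G : SimpleGraph V) : V → ℝ := by
  classical exact (adjMatrix_isHermitian G).eigenvalues

/-- `sLap G k` is `s_k(G)`, the sum of the `k` largest Laplacian eigenvalues of `G`. -/
noncomputable def sLap [Fintype V] [DecidableEq V] (G : SimpleGraph V) (k : ℕ) : ℝ :=
  sumKLargest (lapEig G) k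

/-- The number of edges of `G`. -/
noncomputable def numEdges [Fintype V] (G : SimpleGraph V) : ℕ := by
  classical exact G.edgeFinset.card

/-- `BC G k`: Brouwer's conjectured inequality `s_k(G) ≤ m + (k+1 choose 2)`. -/
def BC [Fintype V] [DecidableEq V] (G : SimpleGraph V) (k : ℕ) : Prop :=
  sLap G k ≤ numEdges G + (k + 1).choose 2

/-- Number of edges of `G` with both endpoints in `S`. -/
noncomputable def edgesWithin [Fintype V] [DecidableEq V] (G : SimpleGraph V)
    (S : Finset V) : ℕ := by
  classical exact (G.edgeFinset.filter (fun e => ∀ v ∈ e, v ∈ S)).card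

/-- The adjacency spectral radius of `G`, i.e. the largest adjacency eigenvalue. -/
noncomputable def specRad [Fintype V] [DecidableEq V] (G : SimpleGraph V) : ℝ :=
  sumKLargest (adjEig G) 1

/-- The maximum subgraph spectral density `t(G)`:
the supremum of `ρ(G[S])/|S|` over nonempty vertex subsets `S`. -/
noncomputable def maxDensity [Fintype V] [DecidableEq V] (G : SimpleGraph V) : ℝ :=
  sSup { x : ℝ | ∃ S : Finset V, S.Nonempty ∧
    x = specRad (G.induce (↑S : Set V)) / (S.card : ℝ) }

/-- Edge-edit distance between two graphs on the same vertex set. -/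
noncomputable def editDistance [Fintype V] (G H : SimpleGraph V) : ℕ := by
  classical exact (symmDiff G.edgeFinset H.edgeFinset).card

/-- A split graph: the vertex set partitions into a clique and an independent set. -/
def IsSplit (G : SimpleGraph V) : Prop :=
  ∃ C : Set V, G.IsClique C ∧ Gᶜ.IsClique Cᶜ

/-- The splittance of `G`: the least number of edge edits needed to reach a split graph. -/
noncomputable def splittance [Fintype V] (G : SimpleGraph V) : ℕ :=
  sInf { d : ℕ | ∃ H : SimpleGraph V, IsSplit H ∧ editDistance G H = d }

/-- The join `G + K₁` of `G` with one new vertex adjacent to every vertex of `G`. -/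
def joinOne (G : SimpleGraph V) : SimpleGraph (Option V) where
  Adj x y := x ≠ y ∧ ∀ a, x = some a → ∀ b, y = some b → G.Adj a b
  symm := by
    constructor
    rintro x y ⟨hxy, h⟩
    exact ⟨hxy.symm, fun a ha b hb => (h b hb a ha).symm⟩
  loopless := by constructor; rintro x ⟨hxx, -⟩; exact hxx rfl

lemma lapEig_eq [Fintype V] [DecidableEq V] (G : SimpleGraph V) [DecidableRel G.Adj] :
    lapEig G = (lapMatrix_isHermitian G).eigenvalues := by
  unfold lapEig
  congr!

lemma numEdges_eq [Fintype V] (G : SimpleGraph V) [Fintype G.edgeSet] :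
    numEdges G = G.edgeFinset.card := by
  unfold numEdges
  congr!

lemma sumKLargest_le [Fintype V] {f : V → ℝ} {k : ℕ} {b : ℝ} (hb : 0 ≤ b)
    (h : ∀ T : Finset V, T.card = k → ∑ i ∈ T, f i ≤ b) : sumKLargest f k ≤ b :=
  Real.sSup_le (by rintro _ ⟨T, hT, rfl⟩; exact h T hT) hb

lemma sumKLargest_le_sum [Fintype V] {f : V → ℝ} (hf : 0 ≤ f) (k : ℕ) :
    sumKLargest f k ≤ ∑ i, f i :=
  sumKLargest_le (Finset.sum_nonneg fun i _ => hf i) fun T _ =>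
    Finset.sum_le_sum_of_subset_of_nonneg (Finset.subset_univ T) fun i _ _ => hf i

lemma sumKLargest_le_mul [Fintype V] {f : V → ℝ} {c : ℝ} (hc : 0 ≤ c) (hf : ∀ i, f i ≤ c)
    (k : ℕ) : sumKLargest f k ≤ k * c :=
  sumKLargest_le (by positivity) fun T hT => by
    simpa [hT] using Finset.sum_le_card_nsmul T f c fun i _ => hf i

section Laplacian

variable [Fintype V] [DecidableEq V] (G : SimpleGraph V) [DecidableRel G.Adj]

lemma lapMatrix_apply_self (j : V) : G.lapMatrix ℝ j j = G.degree j := by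
  simp [SimpleGraph.lapMatrix, SimpleGraph.degMatrix]

lemma sum_norm_lapMatrix_offDiag (j : V) :
    ∑ l ∈ univ.erase j, ‖G.lapMatrix ℝ j l‖ = G.degree j := by
  have hrow : ∀ l ∈ univ.erase j, ‖G.lapMatrix ℝ j l‖ = if G.Adj j l then 1 else 0 := by
    intro l hl
    have hlj : j ≠ l := (Finset.ne_of_mem_erase hl).symm
    by_cases hadj : G.Adj j l <;>
      simp [SimpleGraph.lapMatrix, SimpleGraph.degMatrix, hlj, hadj]
  rw [Finset.sum_congr rfl hrow, Finset.sum_erase _ (by simp), ← G.degree_eq_sum_if_adj]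

lemma sum_lapEig : ∑ i, lapEig G i = 2 * numEdges G := by
  have htrace := (lapMatrix_isHermitian G).trace_eq_sum_eigenvalues
  simp only [RCLike.ofReal_real_eq_id, id] at htrace
  rw [lapEig_eq, ← htrace, Matrix.trace]
  simp only [Matrix.diag, lapMatrix_apply_self]
  exact_mod_cast G.sum_degrees_eq_twice_card_edges.trans (by rw [numEdges_eq])

lemma lapEig_nonneg : 0 ≤ lapEig G := fun i => by
  rw [lapEig_eq]
  exact (SimpleGraph.posSemidef_lapMatrix ℝ G).eigenvalues_nonneg i

-- Gershgorin: row `j` of the Laplacian has centre `deg j` and radius `deg j`.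
lemma lapEig_le_two_mul_maxDegree (i : V) : lapEig G i ≤ 2 * G.maxDegree := by
  have hev : Module.End.HasEigenvalue (Matrix.toLin' (G.lapMatrix ℝ)) (lapEig G i) := by
    rw [lapEig_eq]
    refine .of_mem_spectrum ?_
    rw [Matrix.spectrum_toLin']
    exact (lapMatrix_isHermitian G).eigenvalues_mem_spectrum_real i
  obtain ⟨j, hj⟩ := eigenvalue_mem_ball hev
  rw [Metric.mem_closedBall, Real.dist_eq, lapMatrix_apply_self, sum_norm_lapMatrix_offDiag] at hj
  have hdeg : (G.degree j : ℝ) ≤ G.maxDegree := mod_cast G.degree_le_maxDegree j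
  linarith [(abs_le.mp hj).2]

lemma sLap_le_two_mul_numEdges (k : ℕ) : sLap G k ≤ 2 * numEdges G :=
  sum_lapEig G ▸ sumKLargest_le_sum (lapEig_nonneg G) k

lemma sLap_le_mul_two_mul_maxDegree (k : ℕ) : sLap G k ≤ k * (2 * G.maxDegree) :=
  sumKLargest_le_mul (by positivity) (lapEig_le_two_mul_maxDegree G) k

end Laplacian

theorem bc_of_maxDegree_general {V : Type*} [Fintype V] [DecidableEq V] (G : SimpleGraph V)
    [DecidableRel G.Adj] (k : ℕ) (hk : 2 * G.maxDegree + 3 ≤ k) : BC G k := by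
  have hchoose : ((k + 1).choose 2 : ℝ) = (k + 1) * k / 2 := by
    rw [Nat.cast_choose_two]; push_cast; ring
  have hk' : (2 * G.maxDegree : ℝ) + 3 ≤ k := mod_cast hk
  unfold BC
  rw [hchoose]
  -- If `m ≤ k(k+1)/2`, `s_k ≤ 2m` suffices; otherwise `s_k ≤ 2Δk ≤ k(k+1) < m + k(k+1)/2`.
  rcases le_total (numEdges G : ℝ) ((k + 1) * k / 2) with hm | hm
  · linarith [sLap_le_two_mul_numEdges G k]
  · nlinarith [sLap_le_mul_two_mul_maxDegree G k]

/-- `BC_k(G)` holds for every `k ≥ 2Δ + 3`, where `Δ` is the maximum degree. -/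
theorem bc_of_maxDegree {V : Type*} [Fintype V] [DecidableEq V] (G : SimpleGraph V)
    [DecidableRel G.Adj] (k : ℕ) (hk : 2 * G.maxDegree + 3 ≤ k)
    (hk2 : k ≤ Fintype.card V) : BC G k :=
  bc_of_maxDegree_general G k hk

end Brouwer
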